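/- (Scaling in E_σ^s, dilation λ > 1) Let s ≤ 0, φ ∈ E_σ^s(ℝ^d) with supp φ̂ ⊂ {ξ : |ξ| ≥ ε₀} for some ε₀ > 0, and define φ_λ(x) = φ(λx). Then for λ > 1: if σ ≤ 0, ‖φ_λ‖_{E_σ^s} ≤ C λ^{−d/2} 2^{s(λ−1)ε₀} ‖φ‖_{E_σ^s}; if σ > 0, ‖φ_λ‖_{E_σ^s} ≤ C λ^{−d/2+σ} 2^{s(λ−1)ε₀} ‖φ‖_{E_σ^s}. -/

import Mathlib

/-!
Dilating `φ` by `λ` dilates `𝓕 φ` by `λ⁻¹` and multiplies it by `λ⁻ᵈ`; the substitution `ξ = λ η`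
in the `L²` norm gives back `λ^{d/2}`. On the support of `𝓕 φ` one has `ε₀ ≤ |η|`, and since `s ≤ 0`
the weight obeys `⟨λη⟩^σ 2^{s|λη|} ≤ λ^{max σ 0} 2^{s(λ-1)ε₀} ⟨η⟩^σ 2^{s|η|}`. So `C = 1` works.
-/

open MeasureTheory FourierTransform ENNReal

noncomputable section

abbrev Vd (d : ℕ) := EuclideanSpace ℝ (Fin d)

def l1 {d : ℕ} (ξ : Vd d) : ℝ := ∑ i, |ξ i|

def jap {d : ℕ} (ξ : Vd d) : ℝ := Real.sqrt (1 + ‖ξ‖ ^ 2)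

/-- The E_σ^s norm: ‖⟨ξ⟩^σ 2^{s|ξ|} f̂(ξ)‖_{L²}. -/
def Enorm (d : ℕ) (s σ : ℝ) (f : Vd d → ℂ) : ℝ≥0∞ :=
  eLpNorm (fun ξ => ((jap ξ ^ σ * (2 : ℝ) ^ (s * l1 ξ) : ℝ) : ℂ) * 𝓕 f ξ) 2 volume

open Module RealInnerProductSpace

section Dilation

variable {V : Type*} [NormedAddCommGroup V] [MeasurableSpace V] [BorelSpace V]

theorem eLpNorm_comp_smul [NormedSpace ℝ V] [FiniteDimensional ℝ V] (μ : Measure V)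
    [μ.IsAddHaarMeasure] {F : Type*} [NormedAddCommGroup F] (f : V → F) {c : ℝ} (hc : c ≠ 0)
    {p : ℝ≥0∞} (hp : p ≠ ∞) :
    eLpNorm (fun x => f (c • x)) p μ
      = ENNReal.ofReal |(c ^ finrank ℝ V)⁻¹| ^ (1 / p).toReal * eLpNorm f p μ := by
  rw [← smul_eq_mul, ← eLpNorm_smul_measure_of_ne_top hp, ← Measure.map_addHaar_smul μ hc]
  exact ((MeasurableEquiv.smul₀ c hc).measurableEmbedding.eLpNorm_map_measure (g := f)).symm

theorem fourier_comp_smul [InnerProductSpace ℝ V] [FiniteDimensional ℝ V]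
    {E : Type*} [NormedAddCommGroup E] [NormedSpace ℂ E] (f : V → E) {c : ℝ} (hc : c ≠ 0)
    (w : V) :
    𝓕 (fun x => f (c • x)) w = |(c ^ finrank ℝ V)⁻¹| • 𝓕 f (c⁻¹ • w) := by
  have hinner : ∀ x : V, ⟪c • x, c⁻¹ • w⟫ = ⟪x, w⟫ := fun x => by
    rw [real_inner_smul_left, real_inner_smul_right, ← mul_assoc, mul_inv_cancel₀ hc, one_mul]
  simp only [Real.fourier_eq, ← Measure.integral_comp_smul volume _ c, hinner]

theorem eLpNorm_mul_fourier_comp_smul_le [InnerProductSpace ℝ V] [FiniteDimensional ℝ V]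
    (w : V → ℝ) (f : V → ℂ) {c A : ℝ} (hc : 0 < c)
    (hw : ∀ ξ ∈ Function.support (𝓕 f), |w (c • ξ)| ≤ A * |w ξ|) {p : ℝ≥0∞} (hp : p ≠ ∞) :
    eLpNorm (fun ξ => (w ξ : ℂ) * 𝓕 (fun x => f (c • x)) ξ) p volume
      ≤ ENNReal.ofReal ((c ^ finrank ℝ V)⁻¹ * A) * ENNReal.ofReal (c ^ finrank ℝ V) ^ (1 / p).toReal
        * eLpNorm (fun ξ => (w ξ : ℂ) * 𝓕 f ξ) p volume := by
  have hpointwise : ∀ ξ, ‖(w ξ : ℂ) * 𝓕 (fun x => f (c • x)) ξ‖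
      ≤ (c ^ finrank ℝ V)⁻¹ * A * ‖(w (c⁻¹ • ξ) : ℂ) * 𝓕 f (c⁻¹ • ξ)‖ := fun ξ => by
    rw [fourier_comp_smul f hc.ne', abs_of_pos (by positivity)]
    by_cases hξ : 𝓕 f (c⁻¹ • ξ) = 0
    · simp [hξ]
    have hwξ : |w ξ| ≤ A * |w (c⁻¹ • ξ)| := by simpa only [smul_inv_smul₀ hc.ne'] using hw _ hξ
    simp only [norm_mul, norm_smul, Complex.norm_real, Real.norm_eq_abs,
      abs_of_pos (inv_pos.2 (pow_pos hc _))]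
    calc |w ξ| * ((c ^ finrank ℝ V)⁻¹ * ‖𝓕 f (c⁻¹ • ξ)‖)
        ≤ A * |w (c⁻¹ • ξ)| * ((c ^ finrank ℝ V)⁻¹ * ‖𝓕 f (c⁻¹ • ξ)‖) := by gcongr
      _ = _ := by ring
  calc eLpNorm (fun ξ => (w ξ : ℂ) * 𝓕 (fun x => f (c • x)) ξ) p volume
      ≤ ENNReal.ofReal ((c ^ finrank ℝ V)⁻¹ * A)
          * eLpNorm (fun ξ => (w (c⁻¹ • ξ) : ℂ) * 𝓕 f (c⁻¹ • ξ)) p volume :=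
        eLpNorm_le_mul_eLpNorm_of_ae_le_mul (.of_forall hpointwise) p
    _ = _ := by
        rw [eLpNorm_comp_smul volume (fun ξ => (w ξ : ℂ) * 𝓕 f ξ) (inv_ne_zero hc.ne') hp,
          inv_pow, inv_inv, abs_of_pos (pow_pos hc _), mul_assoc]

end Dilation

section Weight

variable {d : ℕ}

lemma jap_pos (ξ : Vd d) : 0 < jap ξ := Real.sqrt_pos.2 (by positivity)

lemma l1_smul (c : ℝ) (ξ : Vd d) : l1 (c • ξ) = |c| * l1 ξ := by
  simp [l1, Finset.mul_sum, abs_mul]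

lemma jap_le_jap_smul {c : ℝ} (hc : 1 ≤ |c|) (ξ : Vd d) : jap ξ ≤ jap (c • ξ) := by
  unfold jap
  gcongr
  rw [norm_smul, Real.norm_eq_abs]
  exact le_mul_of_one_le_left (norm_nonneg ξ) hc

lemma jap_smul_le {c : ℝ} (hc : 1 ≤ |c|) (ξ : Vd d) : jap (c • ξ) ≤ |c| * jap ξ := by
  rw [jap, jap, ← Real.sqrt_sq (abs_nonneg c), ← Real.sqrt_mul (sq_nonneg _)]
  gcongr
  rw [norm_smul, Real.norm_eq_abs, mul_pow, mul_add, mul_one]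
  gcongr
  nlinarith

lemma jap_smul_rpow_le {c : ℝ} (hc : 1 ≤ c) (σ : ℝ) (ξ : Vd d) :
    jap (c • ξ) ^ σ ≤ c ^ max σ 0 * jap ξ ^ σ := by
  have hc' : 1 ≤ |c| := hc.trans (le_abs_self c)
  rcases le_or_gt σ 0 with hσ | hσ
  · rw [max_eq_right hσ, Real.rpow_zero, one_mul]
    exact Real.rpow_le_rpow_of_nonpos (jap_pos ξ) (jap_le_jap_smul hc' ξ) hσ
  · rw [max_eq_left hσ.le, ← Real.mul_rpow (by linarith) (jap_pos ξ).le]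
    have hle : jap (c • ξ) ≤ c * jap ξ := by
      simpa only [abs_of_nonneg (zero_le_one.trans hc)] using jap_smul_le hc' ξ
    exact Real.rpow_le_rpow (jap_pos _).le hle hσ.le

lemma rpow_mul_l1_smul_le {b s c ε₀ : ℝ} (hb : 1 ≤ b) (hs : s ≤ 0) (hc : 1 ≤ c) {ξ : Vd d}
    (hξ : ε₀ ≤ l1 ξ) : b ^ (s * l1 (c • ξ)) ≤ b ^ (s * (c - 1) * ε₀) * b ^ (s * l1 ξ) := by
  rw [l1_smul, abs_of_nonneg (by linarith), ← Real.rpow_add (by linarith)]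
  apply Real.rpow_le_rpow_of_exponent_le hb
  have : s * (c - 1) * l1 ξ ≤ s * (c - 1) * ε₀ :=
    mul_le_mul_of_nonpos_left hξ (mul_nonpos_of_nonpos_of_nonneg hs (by linarith))
  linarith

def Eweight (s σ : ℝ) (ξ : Vd d) : ℝ := jap ξ ^ σ * 2 ^ (s * l1 ξ)

lemma Eweight_pos (s σ : ℝ) (ξ : Vd d) : 0 < Eweight s σ ξ := by
  have := jap_pos ξ
  unfold Eweight
  positivity

lemma Enorm_eq_eLpNorm_Eweight (s σ : ℝ) (f : Vd d → ℂ) :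
    Enorm d s σ f = eLpNorm (fun ξ => (Eweight s σ ξ : ℂ) * 𝓕 f ξ) 2 volume :=
  rfl

lemma Eweight_smul_le {s σ c ε₀ : ℝ} (hs : s ≤ 0) (hc : 1 ≤ c) {ξ : Vd d} (hξ : ε₀ ≤ l1 ξ) :
    Eweight s σ (c • ξ) ≤ c ^ max σ 0 * 2 ^ (s * (c - 1) * ε₀) * Eweight s σ ξ :=
  calc Eweight s σ (c • ξ)
      ≤ (c ^ max σ 0 * jap ξ ^ σ) * (2 ^ (s * (c - 1) * ε₀) * 2 ^ (s * l1 ξ)) := by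
        have := jap_pos ξ
        exact mul_le_mul (jap_smul_rpow_le hc σ ξ) (rpow_mul_l1_smul_le one_le_two hs hc hξ)
          (by positivity) (by positivity)
    _ = c ^ max σ 0 * 2 ^ (s * (c - 1) * ε₀) * Eweight s σ ξ := by
        unfold Eweight
        ring

theorem Enorm_comp_smul_le {s σ ε₀ c : ℝ} (hs : s ≤ 0) (hc : 1 ≤ c) {φ : Vd d → ℂ}
    (hφ : Function.support (𝓕 φ) ⊆ {ξ : Vd d | ε₀ ≤ l1 ξ}) :
    Enorm d s σ (fun x => φ (c • x))
      ≤ ENNReal.ofReal (c ^ (-(d : ℝ) / 2 + max σ 0) * 2 ^ (s * (c - 1) * ε₀)) * Enorm d s σ φ := by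
  have hc₀ : 0 < c := by linarith
  have hweight : ∀ ξ ∈ Function.support (𝓕 φ), |Eweight s σ (c • ξ)|
      ≤ c ^ max σ 0 * 2 ^ (s * (c - 1) * ε₀) * |Eweight s σ ξ| := fun ξ hξ => by
    rw [abs_of_pos (Eweight_pos ..), abs_of_pos (Eweight_pos ..)]
    exact Eweight_smul_le hs hc (hφ hξ)
  have hconst : ((c ^ d)⁻¹ * (c ^ max σ 0 * 2 ^ (s * (c - 1) * ε₀))) * (c ^ d) ^ (1 / 2 : ℝ)
      = c ^ (-(d : ℝ) / 2 + max σ 0) * 2 ^ (s * (c - 1) * ε₀) := by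
    rw [Real.rpow_add hc₀, show -(d : ℝ) / 2 = -(d : ℝ) + d * (1 / 2) by ring, Real.rpow_add hc₀,
      Real.rpow_neg hc₀.le, Real.rpow_mul hc₀.le, Real.rpow_natCast]
    ring
  have := eLpNorm_mul_fourier_comp_smul_le (Eweight s σ) φ hc₀ hweight (p := 2) (by simp)
  rw [finrank_euclideanSpace_fin, show ((1 : ℝ≥0∞) / 2).toReal = 1 / 2 by simp,
    ENNReal.ofReal_rpow_of_nonneg (by positivity) (by norm_num),
    ← ENNReal.ofReal_mul (by positivity), hconst] at this
  rwa [Enorm_eq_eLpNorm_Eweight, Enorm_eq_eLpNorm_Eweight]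

end Weight

theorem stmt10_general (d : ℕ) (s σ ε₀ : ℝ) (hs : s ≤ 0) :
    ∃ C : ℝ, 0 < C ∧ ∀ φ : Vd d → ℂ,
      Function.support (𝓕 φ) ⊆ {ξ : Vd d | ε₀ ≤ l1 ξ} →
      ∀ lam : ℝ, 1 < lam →
        (σ ≤ 0 → Enorm d s σ (fun x => φ (lam • x)) ≤
          ENNReal.ofReal (C * lam ^ (-(d : ℝ)/2) * (2 : ℝ) ^ (s * (lam - 1) * ε₀)) *
            Enorm d s σ φ) ∧
        (0 < σ → Enorm d s σ (fun x => φ (lam • x)) ≤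
          ENNReal.ofReal (C * lam ^ (-(d : ℝ)/2 + σ) * (2 : ℝ) ^ (s * (lam - 1) * ε₀)) *
            Enorm d s σ φ) := by
  refine ⟨1, one_pos, fun φ hφ lam hlam => ⟨fun hσ => ?_, fun hσ => ?_⟩⟩
  · simpa only [one_mul, max_eq_right hσ, add_zero] using Enorm_comp_smul_le (σ := σ) hs hlam.le hφ
  · simpa only [one_mul, max_eq_left hσ.le] using Enorm_comp_smul_le (σ := σ) hs hlam.le hφ

/-- scaling in E_σ^s for dilations λ > 1: if s ≤ 0 and
supp φ̂ ⊂ {|ξ| ≥ ε₀}, then ‖φ(λ·)‖_{E_σ^s} ≤ C λ^{−d/2} 2^{s(λ−1)ε₀} ‖φ‖_{E_σ^s}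
for σ ≤ 0, and ‖φ(λ·)‖_{E_σ^s} ≤ C λ^{−d/2+σ} 2^{s(λ−1)ε₀} ‖φ‖_{E_σ^s} for σ > 0. -/
theorem stmt10 (d : ℕ) (s σ ε₀ : ℝ) (hs : s ≤ 0) (hε : 0 < ε₀) :
    ∃ C : ℝ, 0 < C ∧ ∀ φ : Vd d → ℂ,
      Function.support (𝓕 φ) ⊆ {ξ : Vd d | ε₀ ≤ l1 ξ} →
      ∀ lam : ℝ, 1 < lam →
        (σ ≤ 0 → Enorm d s σ (fun x => φ (lam • x)) ≤
          ENNReal.ofReal (C * lam ^ (-(d : ℝ)/2) * (2 : ℝ) ^ (s * (lam - 1) * ε₀)) *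
            Enorm d s σ φ) ∧
        (0 < σ → Enorm d s σ (fun x => φ (lam • x)) ≤
          ENNReal.ofReal (C * lam ^ (-(d : ℝ)/2 + σ) * (2 : ℝ) ^ (s * (lam - 1) * ε₀)) *
            Enorm d s σ φ) :=
  stmt10_general d s σ ε₀ hs
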